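/- For every FO-identifiable 3-valued structure S and every 2-valued structure S♮: S♮ ∈ γ(S) if and only if S♮ ⊨ γ̂(S), where γ̂(S) = F ∧ ξ^S is the first-order characteristic formula of S. -/

import Mathlib

/-!
Common framework: 2-valued and 3-valued logical structures over a relational
vocabulary with a designated binary equality predicate, embedding, first-order
formulas with transitive closure and their Tarskian semantics, characteristic
formulas, canonical abstraction.
-/

namespace HeapAbs

/-- The three truth values 0, 1/2, 1. -/
inductive TV : Type
  | zero
  | half
  | one
  deriving DecidableEq

/-- Information order on truth values: `l1 ⊑ l2` iff `l1 = l2` or `l2 = 1/2`. -/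
def TV.le (a b : TV) : Prop := a = b ∨ b = TV.half

/-- `v` is the least upper bound (join) of the set `A` in the information order. -/
def TV.IsJoin (A : Set TV) (v : TV) : Prop :=
  (∀ a ∈ A, TV.le a v) ∧ ∀ w, (∀ a ∈ A, TV.le a w) → TV.le v w

/-- A (relational) vocabulary: a set of predicate symbols with arities and a
designated binary equality symbol. -/
structure Voc : Type 1 where
  rel : Type
  ar : rel → ℕ
  eqr : rel
  eq_ar : ar eqr = 2

/-- The pair `(u, v)` as a tuple (used for binary predicates). -/
def pair {α : Type _} {n : ℕ} (u v : α) : Fin n → α :=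
  fun i => if (i : ℕ) = 0 then u else v

/-- A 3-valued logical structure over the vocabulary `σ`. -/
structure Str3 (σ : Voc) : Type 1 where
  U : Type
  ι : (r : σ.rel) → (Fin (σ.ar r) → U) → TV
  eq_refl : ∀ u : U, ι σ.eqr (pair u u) ≠ TV.zero
  eq_ne : ∀ u v : U, u ≠ v → ι σ.eqr (pair u v) = TV.zero

/-- A 2-valued logical structure over `σ`: all predicate values are definite and
the equality symbol is interpreted as true equality. -/
structure Str2 (σ : Voc) : Type 1 where
  U : Type
  ι : (r : σ.rel) → (Fin (σ.ar r) → U) → Bool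
  eq_iff : ∀ u v : U, ι σ.eqr (pair u v) = true ↔ u = v

/-- The value of a predicate of a 2-valued structure, seen as a truth value. -/
def Str2.tv {σ : Voc} (C : Str2 σ) (r : σ.rel) (t : Fin (σ.ar r) → C.U) : TV :=
  if C.ι r t then TV.one else TV.zero

/-- `f` embeds the 2-valued structure `C` into the 3-valued structure `S`:
`f` is surjective and every predicate value of `C` is ⊑ the corresponding
value of `S`. -/
def Embeds {σ : Voc} (C : Str2 σ) (S : Str3 σ) (f : C.U → S.U) : Prop :=
  Function.Surjective f ∧
    ∀ (r : σ.rel) (t : Fin (σ.ar r) → C.U), TV.le (C.tv r t) (S.ι r (f ∘ t))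

/-- First-order formulas with transitive closure over vocabulary `σ`, with
free variables drawn from `V`. -/
inductive Fml (σ : Voc) : Type → Type 1 where
  | tru {V : Type} : Fml σ V
  | atom {V : Type} (r : σ.rel) (ts : Fin (σ.ar r) → V) : Fml σ V
  | not {V : Type} : Fml σ V → Fml σ V
  | or {V : Type} : Fml σ V → Fml σ V → Fml σ V
  | ex {V : Type} : Fml σ (Option V) → Fml σ V
  | tc {V : Type} (φ : Fml σ (Option (Option V))) (a b : V) : Fml σ V

/-- Tarskian satisfaction of a formula in a 2-valued structure under an
assignment `ρ` of the free variables. -/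
def Str2.Sat {σ : Voc} (C : Str2 σ) : {V : Type} → (V → C.U) → Fml σ V → Prop
  | _, _, .tru => True
  | _, ρ, .atom r ts => C.ι r (ρ ∘ ts) = true
  | _, ρ, .not φ => ¬ C.Sat ρ φ
  | _, ρ, .or φ ψ => C.Sat ρ φ ∨ C.Sat ρ ψ
  | _, ρ, .ex φ => ∃ m : C.U, C.Sat (fun v => Option.elim v m ρ) φ
  | _, ρ, .tc φ a b =>
      Relation.TransGen
        (fun x y => C.Sat (fun v => Option.elim v y (fun v' => Option.elim v' x ρ)) φ)
        (ρ a) (ρ b)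

/-- Satisfaction of a closed formula. -/
def SatC {σ : Voc} (C : Str2 σ) (φ : Fml σ Empty) : Prop :=
  C.Sat (fun x => x.elim) φ

namespace Fml

def fls {σ : Voc} {V : Type} : Fml σ V := .not .tru

def and {σ : Voc} {V : Type} (φ ψ : Fml σ V) : Fml σ V := .not (.or (.not φ) (.not ψ))

def imp {σ : Voc} {V : Type} (φ ψ : Fml σ V) : Fml σ V := .or (.not φ) ψ

def all {σ : Voc} {V : Type} (φ : Fml σ (Option V)) : Fml σ V := .not (.ex (.not φ))

def conj {σ : Voc} {V : Type} (l : List (Fml σ V)) : Fml σ V := l.foldr .and .tru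

def disj {σ : Voc} {V : Type} (l : List (Fml σ V)) : Fml σ V := l.foldr .or .fls

/-- Renaming of free variables. -/
def map {σ : Voc} : {V W : Type} → (V → W) → Fml σ V → Fml σ W
  | _, _, _, .tru => .tru
  | _, _, g, .atom r ts => .atom r (g ∘ ts)
  | _, _, g, .not φ => .not (φ.map g)
  | _, _, g, .or φ ψ => .or (φ.map g) (ψ.map g)
  | _, _, g, .ex φ => .ex (φ.map (Option.map g))
  | _, _, g, .tc φ a b => .tc (φ.map (Option.map (Option.map g))) (g a) (g b)

end Fml

/-- The characteristic formula `p^B` of the truth value `B` for the predicate `p`: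
`p^0 := ¬p`, `p^1 := p`, `p^{1/2} := true`. -/
def charFml {σ : Voc} {V : Type} (p : σ.rel) (ts : Fin (σ.ar p) → V) : TV → Fml σ V
  | TV.zero => .not (.atom p ts)
  | TV.one => .atom p ts
  | TV.half => .tru

/-- `node` is a family of node formulas (one per node of `S`, with a single free
variable `w`) witnessing that `S` is FO-identifiable: for every 2-valued `C`
embedding into `S` via `f` and every concrete node `uh`, `f uh = u` iff `C`
satisfies `node u` under `[w ↦ uh]`. -/
def IsNodeFamily {σ : Voc} (S : Str3 σ) (node : S.U → Fml σ Unit) : Prop :=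
  ∀ (C : Str2 σ) (f : C.U → S.U), Embeds C S f →
    ∀ (uh : C.U) (u : S.U), f uh = u ↔ C.Sat (fun _ => uh) (node u)

/-- `S` is FO-identifiable. -/
def FOIdentifiable {σ : Voc} (S : Str3 σ) : Prop :=
  ∃ node : S.U → Fml σ Unit, IsNodeFamily S node

/-- Mutual exclusivity of a family of node formulas: in every 2-valued structure
that embeds into `S`, every concrete node satisfies at most one node formula. -/
def MutExcl {σ : Voc} (S : Str3 σ) (node : S.U → Fml σ Unit) : Prop :=
  ∀ C : Str2 σ, (∃ f : C.U → S.U, Embeds C S f) →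
    ∀ (uh : C.U) (u1 u2 : S.U), u1 ≠ u2 →
      ¬ (C.Sat (fun _ => uh) (node u1) ∧ C.Sat (fun _ => uh) (node u2))

/-- `S` is a bounded structure: any two distinct nodes are distinguished by a
unary predicate having distinct definite values on them. -/
def Bounded {σ : Voc} (S : Str3 σ) : Prop :=
  ∀ u1 u2 : S.U, u1 ≠ u2 →
    ∃ p : σ.rel, σ.ar p = 1 ∧
      S.ι p (fun _ => u1) ≠ S.ι p (fun _ => u2) ∧
      S.ι p (fun _ => u1) ≠ TV.half ∧ S.ι p (fun _ => u2) ≠ TV.half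

/-- The node formula `node^S_u(w) := ⋀_{p unary} p^{ι^S(p)(u)}(w)`. -/
noncomputable def boundedNode {σ : Voc} [Fintype σ.rel] (S : Str3 σ) (u : S.U) : Fml σ Unit :=
  Fml.conj
    (((Finset.univ : Finset {p : σ.rel // σ.ar p = 1}).toList).map
      (fun p => charFml p.1 (fun _ => ()) (S.ι p.1 (fun _ => u))))

/-- The conjunction `⋀_j node_{t j}(w_j)` over the components of a tuple of
abstract nodes, as a formula with free variables `w_1, …, w_n`. -/
def nodeTuple {σ : Voc} (S : Str3 σ) (node : S.U → Fml σ Unit) {n : ℕ}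
    (t : Fin n → S.U) : Fml σ (Fin n) :=
  Fml.conj (List.ofFn fun j : Fin n => (node (t j)).map (fun _ => j))

/-- Universal closure of a formula with `n` free variables. -/
def closeAll {σ : Voc} : {n : ℕ} → Fml σ (Fin n) → Fml σ Empty
  | 0, φ => φ.map Fin.elim0
  | _ + 1, φ =>
      closeAll (Fml.all (φ.map (fun i => Fin.lastCases none (fun j => some j) i)))

/-- Existential closure of a formula with `n` free variables. -/
def closeEx {σ : Voc} : {n : ℕ} → Fml σ (Fin n) → Fml σ Empty
  | 0, φ => φ.map Fin.elim0
  | _ + 1, φ =>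
      closeEx (Fml.ex (φ.map (fun i => Fin.lastCases none (fun j => some j) i)))

/-- `∃ v : node_u(v)`. -/
noncomputable def existsNode {σ : Voc} (S : Str3 σ) (node : S.U → Fml σ Unit) (u : S.U) :
    Fml σ Empty :=
  .ex ((node u).map (fun _ => (none : Option Empty)))

/-- The totality formula `∀ w : ⋁_i node_{u_i}(w)`. -/
noncomputable def xiTotal {σ : Voc} (S : Str3 σ) [Fintype S.U] (node : S.U → Fml σ Unit) :
    Fml σ Empty :=
  Fml.all (Fml.disj
    (((Finset.univ : Finset S.U).toList).map
      (fun u => (node u).map (fun _ => (none : Option Empty)))))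

/-- The nullary characteristic formula `⋀_{p nullary} p^{ι^S(p)()}`. -/
noncomputable def xiNullary {σ : Voc} [Fintype σ.rel] (S : Str3 σ) : Fml σ Empty :=
  Fml.conj
    (((Finset.univ : Finset σ.rel).toList).map (fun p =>
      if h : σ.ar p = 0 then
        charFml p (fun i => Fin.elim0 (Fin.cast h i))
          (S.ι p (fun i => Fin.elim0 (Fin.cast h i)))
      else .tru))

/-- The predicate characteristic formula
`∀ w1 … wr : ⋀_{tuples ū} ((⋀_j node_{ū j}(w_j)) → p^{ι^S(p)(ū)}(w̄))`. -/
noncomputable def xiPred {σ : Voc} (S : Str3 σ) [Fintype S.U] (node : S.U → Fml σ Unit)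
    (p : σ.rel) : Fml σ Empty :=
  closeAll (Fml.conj
    (((Finset.univ : Finset (Fin (σ.ar p) → S.U)).toList).map
      (fun t => Fml.imp (nodeTuple S node t)
        (charFml p (fun j => j) (S.ι p t)))))

/-- Conjunction of the predicate characteristic formulas over all predicates of
arity ≥ 1. -/
noncomputable def xiPredAll {σ : Voc} [Fintype σ.rel] (S : Str3 σ) [Fintype S.U]
    (node : S.U → Fml σ Unit) : Fml σ Empty :=
  Fml.conj
    (((Finset.univ : Finset σ.rel).toList).map (fun p =>
      if σ.ar p = 0 then .tru else xiPred S node p))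

/-- The first-order characteristic formula `ξ^S` of `S` (w.r.t. the node
formulas `node`). -/
noncomputable def xi {σ : Voc} [Fintype σ.rel] (S : Str3 σ) [Fintype S.U]
    (node : S.U → Fml σ Unit) : Fml σ Empty :=
  (Fml.conj (((Finset.univ : Finset S.U).toList).map (existsNode S node))).and
    ((xiTotal S node).and ((xiNullary S).and (xiPredAll S node)))

/-- The concretization `γ(S)`: the 2-valued structures that embed into `S` and
satisfy the integrity formula `F`. -/
def gammaSet {σ : Voc} (F : Fml σ Empty) (S : Str3 σ) : Set (Str2 σ) :=
  {C | (∃ f : C.U → S.U, Embeds C S f) ∧ SatC C F}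

/-- `S` is the canonical abstraction of the 2-valued structure `C` via `blur`:
`blur` is a surjective embedding that identifies exactly the concrete nodes with
equal canonical names (the values of the unary predicates), and every abstract
predicate value is the join of the concrete values it represents. -/
def IsCanonAbs {σ : Voc} (C : Str2 σ) (S : Str3 σ) (blur : C.U → S.U) : Prop :=
  Embeds C S blur ∧
    (∀ u v : C.U, blur u = blur v ↔
      ∀ p : σ.rel, σ.ar p = 1 → C.ι p (fun _ => u) = C.ι p (fun _ => v)) ∧
    ∀ (p : σ.rel) (t' : Fin (σ.ar p) → S.U),
      TV.IsJoin {b | ∃ t : Fin (σ.ar p) → C.U, blur ∘ t = t' ∧ C.tv p t = b}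
        (S.ι p t')

/-- `S` is an image of canonical abstraction. -/
def ICA {σ : Voc} (S : Str3 σ) : Prop :=
  ∃ (C : Str2 σ) (blur : C.U → S.U), IsCanonAbs C S blur

/-- The concretization of `S` under canonical abstraction. -/
def gammaC {σ : Voc} (F : Fml σ Empty) (S : Str3 σ) : Set (Str2 σ) :=
  {C | (∃ blur : C.U → S.U, IsCanonAbs C S blur) ∧ SatC C F}

/-- `node` is a family of node formulas witnessing canonical-FO-identifiability
of `S`. -/
def IsCanonNodeFamily {σ : Voc} (S : Str3 σ) (node : S.U → Fml σ Unit) : Prop :=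
  ∀ (C : Str2 σ) (blur : C.U → S.U), IsCanonAbs C S blur →
    ∀ (uh : C.U) (u : S.U), blur uh = u ↔ C.Sat (fun _ => uh) (node u)

/-- `τ^S[p]`: for every tuple where `p` has value 1/2, there are concrete
tuples (satisfying the node formulas) on which `p` holds, resp., fails. -/
noncomputable def tauPred {σ : Voc} (S : Str3 σ) [Fintype S.U] (node : S.U → Fml σ Unit)
    (p : σ.rel) : Fml σ Empty :=
  Fml.conj
    (((((Finset.univ : Finset (Fin (σ.ar p) → S.U)).toList).filter
        (fun t => decide (S.ι p t = TV.half))).map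
      (fun t =>
        (closeEx ((nodeTuple S node t).and (.atom p (fun j => j)))).and
          (closeEx ((nodeTuple S node t).and (.not (.atom p (fun j => j))))))))

/-- `τ^S := ξ^S ∧ ⋀_{p of arity ≥ 2} τ^S[p]`. -/
noncomputable def tau {σ : Voc} [Fintype σ.rel] (S : Str3 σ) [Fintype S.U]
    (node : S.U → Fml σ Unit) : Fml σ Empty :=
  (xi S node).and
    (Fml.conj (((Finset.univ : Finset σ.rel).toList).map (fun p =>
      if 2 ≤ σ.ar p then tauPred S node p else .tru)))

/-- Isomorphism of 3-valued structures. -/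
def Iso3 {σ : Voc} (S1 S2 : Str3 σ) : Prop :=
  ∃ e : S1.U ≃ S2.U,
    ∀ (p : σ.rel) (t : Fin (σ.ar p) → S1.U), S1.ι p t = S2.ι p (e ∘ t)

/-- Satisfaction of the NP (existential monadic second-order) characteristic
formula `ψ^S` of `S` in the 2-valued structure `C`: there exist sets `V_u`
(one per node `u` of `S`) that are nonempty, pairwise disjoint, and cover `C`,
such that the nullary and the predicate characteristic conjuncts hold with
`node_{u}(w) := w ∈ V_u`. -/
def SatNP {σ : Voc} (S : Str3 σ) (C : Str2 σ) : Prop :=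
  ∃ V : S.U → Set C.U,
    (∀ u : S.U, ∃ w, w ∈ V u) ∧
    (∀ u1 u2 : S.U, u1 ≠ u2 →
      ∀ w1 ∈ V u1, ∀ w2 ∈ V u2, ¬ C.ι σ.eqr (pair w1 w2) = true) ∧
    (∀ w : C.U, ∃ u : S.U, w ∈ V u) ∧
    (∀ (p : σ.rel) (h : σ.ar p = 0),
      TV.le (C.tv p (fun i => Fin.elim0 (Fin.cast h i)))
        (S.ι p (fun i => Fin.elim0 (Fin.cast h i)))) ∧
    (∀ (p : σ.rel), 1 ≤ σ.ar p →
      ∀ (t : Fin (σ.ar p) → C.U) (us : Fin (σ.ar p) → S.U),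
        (∀ j, t j ∈ V (us j)) → TV.le (C.tv p t) (S.ι p us))

/-!
`ξ^S` says exactly that the relation "`w` satisfies `node u`" is an embedding of `C` into `S`
presented as a relation: every abstract node is hit, every concrete node is covered, and every
tuple related componentwise has its predicate values ⊑ those of `S`. Such a relation is
automatically the graph of a function, because the equality predicate has value `0` on distinct
abstract nodes and `1` on equal concrete ones; so `ξ^S` implies an embedding exists. Conversely,
FO-identifiability says that under any embedding `f` the relation is the graph of `f`, so `ξ^S`
holds.
-/

section Satisfaction

variable {σ : Voc} (C : Str2 σ)

lemma sat_map {V W : Type} (φ : Fml σ V) (g : V → W) (ρ : W → C.U) :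
    C.Sat ρ (φ.map g) ↔ C.Sat (ρ ∘ g) φ := by
  induction φ generalizing W with
  | tru => exact Iff.rfl
  | atom r ts => exact Iff.rfl
  | not φ ih => simp only [Fml.map, Str2.Sat, ih]
  | or φ ψ ih ih' => simp only [Fml.map, Str2.Sat, ih, ih']
  | ex φ ih =>
      have key : ∀ m, (fun v => Option.elim v m ρ) ∘ Option.map g =
          fun v => Option.elim v m (ρ ∘ g) := by
        intro m; funext v; cases v <;> rfl
      simp only [Fml.map, Str2.Sat, ih, key]
  | tc φ a b ih =>
      have key : ∀ x y, (fun v => Option.elim v y fun v' => Option.elim v' x ρ) ∘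
          Option.map (Option.map g) =
            fun v => Option.elim v y fun v' => Option.elim v' x (ρ ∘ g) := by
        intro x y; funext v; rcases v with _ | _ | v <;> rfl
      simp only [Fml.map, Str2.Sat, ih, key]
      rfl

lemma sat_and {V : Type} (ρ : V → C.U) (φ ψ : Fml σ V) :
    C.Sat ρ (φ.and ψ) ↔ C.Sat ρ φ ∧ C.Sat ρ ψ := by
  simp only [Fml.and, Str2.Sat]; tauto

lemma sat_imp {V : Type} (ρ : V → C.U) (φ ψ : Fml σ V) :
    C.Sat ρ (φ.imp ψ) ↔ (C.Sat ρ φ → C.Sat ρ ψ) := by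
  simp only [Fml.imp, Str2.Sat]; tauto

lemma sat_all {V : Type} (ρ : V → C.U) (φ : Fml σ (Option V)) :
    C.Sat ρ (Fml.all φ) ↔ ∀ m : C.U, C.Sat (fun v => Option.elim v m ρ) φ := by
  simp only [Fml.all, Str2.Sat, not_exists, not_not]

lemma sat_conj {V : Type} (ρ : V → C.U) (l : List (Fml σ V)) :
    C.Sat ρ (Fml.conj l) ↔ ∀ φ ∈ l, C.Sat ρ φ := by
  induction l with
  | nil => simp [Fml.conj, Str2.Sat]
  | cons a l ih =>
      simp only [Fml.conj, List.foldr_cons, sat_and, List.forall_mem_cons] at ih ⊢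
      rw [ih]

lemma sat_disj {V : Type} (ρ : V → C.U) (l : List (Fml σ V)) :
    C.Sat ρ (Fml.disj l) ↔ ∃ φ ∈ l, C.Sat ρ φ := by
  induction l with
  | nil => simp [Fml.disj, Fml.fls, Str2.Sat]
  | cons a l ih =>
      simp only [Fml.disj, List.foldr_cons, List.exists_mem_cons_iff] at ih ⊢
      rw [← ih]
      rfl

lemma sat_conj_univ {V α : Type} [Fintype α] (ρ : V → C.U) (φ : α → Fml σ V) :
    C.Sat ρ (Fml.conj ((Finset.univ : Finset α).toList.map φ)) ↔ ∀ a, C.Sat ρ (φ a) := by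
  simp [sat_conj]

lemma sat_disj_univ {V α : Type} [Fintype α] (ρ : V → C.U) (φ : α → Fml σ V) :
    C.Sat ρ (Fml.disj ((Finset.univ : Finset α).toList.map φ)) ↔ ∃ a, C.Sat ρ (φ a) := by
  simp [sat_disj]

lemma comp_lastCases {n : ℕ} {α : Type} (ρ : Fin n → α) (m : α) :
    (fun v => Option.elim v m ρ) ∘
        (fun i : Fin (n + 1) => Fin.lastCases none (fun j => some j) i) = Fin.snoc ρ m := by
  funext i
  refine Fin.lastCases ?_ (fun j => ?_) i <;> simp

lemma sat_closeAll : ∀ {n : ℕ} (φ : Fml σ (Fin n)),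
    SatC C (closeAll φ) ↔ ∀ ρ : Fin n → C.U, C.Sat ρ φ
  | 0, φ => by
      rw [closeAll, SatC, sat_map]
      exact ⟨fun h ρ => Subsingleton.elim ((fun x : Empty => x.elim) ∘ Fin.elim0) ρ ▸ h,
        fun h => h _⟩
  | n + 1, φ => by
      simp only [closeAll, sat_closeAll, sat_all, sat_map, comp_lastCases]
      exact ⟨fun h ρ => Fin.snoc_init_self ρ ▸ h (Fin.init ρ) (ρ (Fin.last n)),
        fun h ρ m => h _⟩

lemma sat_charFml {V : Type} (ρ : V → C.U) (p : σ.rel) (ts : Fin (σ.ar p) → V) (B : TV) :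
    C.Sat ρ (charFml p ts B) ↔ TV.le (C.tv p (ρ ∘ ts)) B := by
  cases B <;> cases h : C.ι p (ρ ∘ ts) <;> simp [charFml, Str2.Sat, Str2.tv, TV.le, h]

lemma sat_nodeTuple {n : ℕ} (S : Str3 σ) (node : S.U → Fml σ Unit) (t : Fin n → S.U)
    (ρ : Fin n → C.U) :
    C.Sat ρ (nodeTuple S node t) ↔ ∀ j, C.Sat (fun _ => ρ j) (node (t j)) := by
  simp only [nodeTuple, sat_conj, List.forall_mem_ofFn_iff, sat_map]
  rfl

end Satisfaction

section EmbedsRel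

variable {σ : Voc} (C : Str2 σ) (S : Str3 σ)

def EmbedsRel (R : C.U → S.U → Prop) : Prop :=
  (∀ u, ∃ w, R w u) ∧ (∀ w, ∃ u, R w u) ∧
    ∀ (p : σ.rel) (t : Fin (σ.ar p) → C.U) (us : Fin (σ.ar p) → S.U),
      (∀ j, R (t j) (us j)) → TV.le (C.tv p t) (S.ι p us)

variable {C S}

lemma embedsRel_graph_iff (f : C.U → S.U) :
    EmbedsRel C S (fun w u => f w = u) ↔ Embeds C S f := by
  constructor
  · rintro ⟨hsurj, -, hle⟩
    exact ⟨hsurj, fun p t => hle p t (f ∘ t) fun _ => rfl⟩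
  · rintro ⟨hsurj, hle⟩
    refine ⟨hsurj, fun w => ⟨f w, rfl⟩, fun p t us htus => ?_⟩
    obtain rfl : f ∘ t = us := funext htus
    exact hle p t

/-- Relating `w` to `u₁ ≠ u₂` would give `eq(w, w) = 1 ⊑ eq(u₁, u₂) = 0`. -/
lemma EmbedsRel.functional {R : C.U → S.U → Prop} (hR : EmbedsRel C S R) {w : C.U}
    {u₁ u₂ : S.U} (h₁ : R w u₁) (h₂ : R w u₂) : u₁ = u₂ := by
  by_contra hne
  have hle := hR.2.2 σ.eqr (pair w w) (pair u₁ u₂) fun j => by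
    by_cases hj : (j : ℕ) = 0 <;> simpa [pair, hj]
  have hww : C.ι σ.eqr (pair w w) = true := (C.eq_iff w w).mpr rfl
  simp [S.eq_ne u₁ u₂ hne, Str2.tv, hww, TV.le] at hle

lemma EmbedsRel.exists_embeds {R : C.U → S.U → Prop} (hR : EmbedsRel C S R) :
    ∃ f : C.U → S.U, Embeds C S f := by
  choose f hf using hR.2.1
  have hgraph : (fun w u => f w = u) = R := by
    funext w u
    exact propext ⟨fun h => h ▸ hf w, hR.functional (hf w)⟩
  exact ⟨f, (embedsRel_graph_iff f).mp (hgraph ▸ hR)⟩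

lemma IsNodeFamily.embedsRel {node : S.U → Fml σ Unit} (hnode : IsNodeFamily S node)
    {f : C.U → S.U} (hf : Embeds C S f) :
    EmbedsRel C S (fun w u => C.Sat (fun _ => w) (node u)) := by
  have hgraph : (fun w u => f w = u) = fun w u => C.Sat (fun _ => w) (node u) := by
    funext w u
    exact propext (hnode C f hf w u)
  exact hgraph ▸ (embedsRel_graph_iff f).mpr hf

end EmbedsRel

section CharacteristicFormula

variable {σ : Voc} (C : Str2 σ) (S : Str3 σ)

lemma satC_xiNullary [Fintype σ.rel] :
    SatC C (xiNullary S) ↔ ∀ (p : σ.rel), σ.ar p = 0 →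
      ∀ (t : Fin (σ.ar p) → C.U) (us : Fin (σ.ar p) → S.U), TV.le (C.tv p t) (S.ι p us) := by
  simp only [SatC, xiNullary, sat_conj_univ]
  refine forall_congr' fun p => ?_
  by_cases hp : σ.ar p = 0
  · have htuple : ∀ {α : Type} (t t' : Fin (σ.ar p) → α), t = t' :=
      fun _ _ => funext fun i => absurd i.2 (by omega)
    simp only [hp, dite_true, sat_charFml, true_implies]
    exact ⟨fun h t us => by convert h using 2 <;> apply htuple, fun h => h _ _⟩
  · simp only [hp, dite_false, false_implies, iff_true]
    trivial

variable [Fintype S.U] (node : S.U → Fml σ Unit)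

lemma satC_existsNodes :
    SatC C (Fml.conj ((Finset.univ : Finset S.U).toList.map (existsNode S node))) ↔
      ∀ u, ∃ w, C.Sat (fun _ => w) (node u) := by
  simp only [SatC, sat_conj_univ, existsNode, Str2.Sat, sat_map]
  rfl

lemma satC_xiTotal : SatC C (xiTotal S node) ↔ ∀ w, ∃ u, C.Sat (fun _ => w) (node u) := by
  simp only [SatC, xiTotal, sat_all, sat_disj_univ, sat_map]
  rfl

lemma satC_xiPred (p : σ.rel) :
    SatC C (xiPred S node p) ↔ ∀ (t : Fin (σ.ar p) → C.U) (us : Fin (σ.ar p) → S.U),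
      (∀ j, C.Sat (fun _ => t j) (node (us j))) → TV.le (C.tv p t) (S.ι p us) := by
  simp only [xiPred, sat_closeAll, sat_conj_univ, sat_imp, sat_nodeTuple, sat_charFml]
  rfl

lemma satC_xiPredAll [Fintype σ.rel] :
    SatC C (xiPredAll S node) ↔ ∀ (p : σ.rel), σ.ar p ≠ 0 →
      ∀ (t : Fin (σ.ar p) → C.U) (us : Fin (σ.ar p) → S.U),
        (∀ j, C.Sat (fun _ => t j) (node (us j))) → TV.le (C.tv p t) (S.ι p us) := by
  simp only [SatC, xiPredAll, sat_conj_univ]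
  refine forall_congr' fun p => ?_
  by_cases hp : σ.ar p = 0
  · simp only [hp, if_true, ne_eq, not_true_eq_false, false_implies, iff_true]
    trivial
  · simp only [hp, if_false, ne_eq, not_false_eq_true, true_implies]
    exact satC_xiPred C S node p

/-- The nullary conjunct covers the predicates for which the tuple condition is vacuous. -/
lemma satC_xi_iff_embedsRel [Fintype σ.rel] :
    SatC C (xi S node) ↔ EmbedsRel C S (fun w u => C.Sat (fun _ => w) (node u)) := by
  rw [xi, SatC, sat_and, sat_and, sat_and, ← SatC, ← SatC, ← SatC, ← SatC, satC_existsNodes,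
    satC_xiTotal, satC_xiNullary, satC_xiPredAll, EmbedsRel]
  refine and_congr_right' (and_congr_right' ⟨fun ⟨h0, h⟩ p t us htus => ?_, fun h => ?_⟩)
  · by_cases hp : σ.ar p = 0
    · exact h0 p hp t us
    · exact h p hp t us htus
  · exact ⟨fun p hp t us => h p t us fun j => absurd j.2 (by omega), fun p _ => h p⟩

end CharacteristicFormula

/-- for every FO-identifiable 3-valued structure `S` (with node
formulas `node`) and every 2-valued structure `C`: `C ∈ γ(S)` iff
`C ⊨ γ̂(S) = F ∧ ξ^S`. -/
theorem mem_gamma_iff_sat_gammaHat {σ : Voc} [Fintype σ.rel] (F : Fml σ Empty)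
    (S : Str3 σ) [Fintype S.U] (node : S.U → Fml σ Unit)
    (hnode : IsNodeFamily S node) (C : Str2 σ) :
    C ∈ gammaSet F S ↔ SatC C (F.and (xi S node)) := by
  rw [SatC, sat_and, ← SatC, ← SatC, satC_xi_iff_embedsRel, gammaSet, Set.mem_ofPred_eq,
    and_comm]
  exact and_congr_right fun _ => ⟨fun ⟨f, hf⟩ => hnode.embedsRel hf, EmbedsRel.exists_embeds⟩
end HeapAbs
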